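/- arXiv:0712.4133 — 4 statements merged into one kernel-verified Lean document; each statement's English description precedes it below -/
import Mathlib

section
/- Let q be a 12-dimensional quadratic form over a field k of characteristic ≠ 2 whose Witt class lies in I³k (the cube of the fundamental ideal of the Witt ring). Then the Witt index of q is 0, 2, or 6; in particular it cannot be 1, 3, 4, or 5. -/
/-!
The anisotropic kernel of `q` again lies in `I³` and has dimension `12 - 2 i_W(q)`.
By the Arason–Pfister Hauptsatz that dimension is `0` or at least `8`, and it is not `10`
since 10-dimensional forms in `I³` are isotropic; so it is `0`, `8` or `12`.
-/

section AnisotropicKernel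

variable {QF : Type*} {dim : QF → ℕ} {anisoPart : QF → QF} {InI3 Anisotropic : QF → Prop}

theorem dim_anisoPart_eq_zero_or_eight_le
    (hI3 : ∀ p, InI3 p → InI3 (anisoPart p)) (haniso : ∀ p, Anisotropic (anisoPart p))
    (hAP : ∀ p, Anisotropic p → InI3 p → dim p ≠ 0 → 8 ≤ dim p) {p : QF} (hp : InI3 p) :
    dim (anisoPart p) = 0 ∨ 8 ≤ dim (anisoPart p) :=
  or_iff_not_imp_left.mpr (hAP _ (haniso p) (hI3 p hp))

theorem dim_anisoPart_ne_ten
    (hI3 : ∀ p, InI3 p → InI3 (anisoPart p)) (haniso : ∀ p, Anisotropic (anisoPart p))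
    (h10 : ∀ p, InI3 p → dim p = 10 → ¬ Anisotropic p) {p : QF} (hp : InI3 p) :
    dim (anisoPart p) ≠ 10 :=
  fun h => h10 _ (hI3 p hp) h (haniso p)

end AnisotropicKernel

theorem stmt_0_general
    {QF : Type*} (dim wittIndex : QF → ℕ) (anisoPart : QF → QF)
    (InI3 Anisotropic : QF → Prop)
    (hdim : ∀ p, dim (anisoPart p) = dim p - 2 * wittIndex p)
    (hle : ∀ p, 2 * wittIndex p ≤ dim p)
    (hI3 : ∀ p, InI3 p → InI3 (anisoPart p))
    (haniso : ∀ p, Anisotropic (anisoPart p))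
    (hAP : ∀ p, Anisotropic p → InI3 p → dim p ≠ 0 → 8 ≤ dim p)
    (h10 : ∀ p, InI3 p → dim p = 10 → ¬ Anisotropic p)
    (q : QF) (h12 : dim q = 12) (hq : InI3 q) :
    wittIndex q = 0 ∨ wittIndex q = 2 ∨ wittIndex q = 6 := by
  have hkernel := hdim q
  have hindex := hle q
  have hzero_or_large := dim_anisoPart_eq_zero_or_eight_le hI3 haniso hAP hq
  have hne_ten := dim_anisoPart_ne_ten hI3 haniso h10 hq
  omega

/-- a 12-dimensional quadratic form `q` in `I³k` (k a field of
characteristic ≠ 2) has Witt index 0, 2, or 6.  The ambient quadratic-form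
theory is axiomatized: `dim` is the dimension, `wittIndex` the Witt index,
`anisoPart` the anisotropic kernel, `InI3` means the Witt class lies in `I³`,
and `Anisotropic` is anisotropy.  The hypotheses record: the Witt
decomposition, that `I³` passes to the anisotropic part, the Arason–Pfister
Hauptsatz (anisotropic nonzero forms in `I³` have dimension ≥ 8), and that
10-dimensional forms in `I³` are isotropic. -/
theorem stmt_0 {k : Type*} [Field k] (hk : ringChar k ≠ 2)
    {QF : Type*} (dim wittIndex : QF → ℕ) (anisoPart : QF → QF)
    (InI3 Anisotropic : QF → Prop)
    (hdim : ∀ p, dim (anisoPart p) = dim p - 2 * wittIndex p)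
    (hle : ∀ p, 2 * wittIndex p ≤ dim p)
    (hI3 : ∀ p, InI3 p → InI3 (anisoPart p))
    (haniso : ∀ p, Anisotropic (anisoPart p))
    (hAP : ∀ p, Anisotropic p → InI3 p → dim p ≠ 0 → 8 ≤ dim p)
    (h10 : ∀ p, InI3 p → dim p = 10 → ¬ Anisotropic p)
    (q : QF) (h12 : dim q = 12) (hq : InI3 q) :
    wittIndex q = 0 ∨ wittIndex q = 2 ∨ wittIndex q = 6 :=
  stmt_0_general dim wittIndex anisoPart InI3 Anisotropic hdim hle hI3 haniso hAP h10 q h12 hq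
end

section
/- Let s ≥ 2 be an integer and suppose (j₁, j₂, …, j_{s/2}) are nonnegative integers (with s even) satisfying the polynomial identity (1 − t^{2^s})/(1 − t) = ∏_{i=1}^{s/2} (1 − t^{(2i−1)·2^{j_i}})/(1 − t^{2i−1}) in ℤ[t]. Then j₁ = s (and j_i = 0 for all i ≥ 2). In particular, no such tuple exists with j₁ < s. -/
/-!
Evaluate both sides at a primitive `2(2i+1)`-th root of unity `ζ ∈ ℂ` with `i ≥ 1`. Since
`ζ^(2i+1) = -1`, the `i`-th factor becomes `∑_{l < 2^{j_i}} (-1)^l`, which vanishes as soon as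
`j_i ≥ 1`; the right side `∑_{l < 2^s} ζ^l` does not vanish, because `ζ^(2^s) ≠ 1` (the odd number
`2i+1 > 1` does not divide `2^s`). So `j_i = 0` for `i ≥ 1`, and evaluating at `t = 1` gives
`2^{∑ j_i} = 2^s`.
-/

open Polynomial Finset

lemma sum_range_two_pow_pow_mul_eq_zero {R : Type*} [CommRing R] {ζ : R} {d j : ℕ}
    (hζ : ζ ^ d = -1) (hj : j ≠ 0) : ∑ l ∈ range (2 ^ j), ζ ^ (l * d) = 0 := by
  simp_rw [mul_comm _ d, pow_mul, hζ]
  rw [neg_one_geom_sum, if_pos ((Nat.even_pow' hj).2 even_two)]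

lemma geom_sum_ne_zero_of_pow_ne_one {R : Type*} [Ring R] {x : R} {n : ℕ} (hx : x ^ n ≠ 1) :
    ∑ i ∈ range n, x ^ i ≠ 0 := by
  intro h
  have := geom_sum_mul x n
  rw [h, zero_mul, eq_comm, sub_eq_zero] at this
  exact hx this

lemma IsPrimitiveRoot.pow_eq_neg_one_of_two_mul {R : Type*} [CommRing R] [IsDomain R] {ζ : R}
    {d : ℕ} (hζ : IsPrimitiveRoot ζ (2 * d)) (hd : d ≠ 0) : ζ ^ d = -1 := by
  apply IsPrimitiveRoot.eq_neg_one_of_two_right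
  simpa [hd] using hζ.pow_of_dvd hd (dvd_mul_left d 2)

lemma IsPrimitiveRoot.pow_two_pow_ne_one_of_odd {R : Type*} [CommMonoid R] {ζ : R} {d : ℕ}
    (hζ : IsPrimitiveRoot ζ (2 * d)) (hd : Odd d) (hd1 : d ≠ 1) (N : ℕ) : ζ ^ 2 ^ N ≠ 1 := by
  rw [Ne, hζ.pow_eq_one_iff_dvd]
  intro h
  exact hd1 ((hd.coprime_two_right.pow_right N).eq_one_of_dvd
    ((dvd_mul_left d 2).trans h))

section

variable {n N : ℕ} {j : ℕ → ℕ}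

lemma eq_zero_of_prod_sum_eq_sum
    (h : ∏ i ∈ range n, (∑ l ∈ range (2 ^ j i), (X : ℤ[X]) ^ (l * (2 * i + 1)))
      = ∑ l ∈ range (2 ^ N), (X : ℤ[X]) ^ l)
    {i : ℕ} (hi : i ∈ range n) (hi0 : i ≠ 0) : j i = 0 := by
  by_contra hj
  obtain ⟨ζ, hζ⟩ : ∃ ζ : ℂ, IsPrimitiveRoot ζ (2 * (2 * i + 1)) :=
    ⟨_, Complex.isPrimitiveRoot_exp _ (by omega)⟩
  have hval := congrArg (aeval ζ) h
  simp only [map_prod, map_sum, map_pow, aeval_X] at hval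
  rw [prod_eq_zero hi
    (sum_range_two_pow_pow_mul_eq_zero (hζ.pow_eq_neg_one_of_two_mul (by omega)) hj)] at hval
  exact geom_sum_ne_zero_of_pow_ne_one
    (hζ.pow_two_pow_ne_one_of_odd (odd_two_mul_add_one i) (by omega) N) hval.symm

lemma sum_eq_of_prod_sum_eq_sum
    (h : ∏ i ∈ range n, (∑ l ∈ range (2 ^ j i), (X : ℤ[X]) ^ (l * (2 * i + 1)))
      = ∑ l ∈ range (2 ^ N), (X : ℤ[X]) ^ l) :
    ∑ i ∈ range n, j i = N := by
  have hval := congrArg (eval 1) h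
  simp only [eval_prod, eval_finsetSum, eval_pow, eval_X, one_pow, sum_const, card_range,
    nsmul_one] at hval
  have hpow : 2 ^ ∑ i ∈ range n, j i = 2 ^ N := by
    rw [← prod_pow_eq_pow_sum]
    exact_mod_cast hval
  exact Nat.pow_right_injective le_rfl hpow

end

open Polynomial in
theorem stmt_3_general (s : ℕ) (hs : 2 ≤ s) (j : ℕ → ℕ)
    (h : ∏ i ∈ Finset.range (s / 2),
        (∑ l ∈ Finset.range (2 ^ j i), (X : Polynomial ℤ) ^ (l * (2 * i + 1)))
      = ∑ l ∈ Finset.range (2 ^ s), (X : Polynomial ℤ) ^ l) :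
    j 0 = s ∧ ∀ i, 1 ≤ i → i < s / 2 → j i = 0 := by
  have hzero : ∀ i, 1 ≤ i → i < s / 2 → j i = 0 := fun i hi hin =>
    eq_zero_of_prod_sum_eq_sum h (mem_range.2 hin) (by omega)
  refine ⟨?_, hzero⟩
  rw [← sum_eq_of_prod_sum_eq_sum h, sum_eq_single_of_mem 0 (mem_range.2 (by omega))]
  intro i hi hi0
  exact hzero i (by omega) (mem_range.1 hi)

open Polynomial in
/-- if `s ≥ 2` is even and nonnegative integers `j₁, …, j_{s/2}`
satisfy the polynomial identity
`(1 − t^{2^s})/(1 − t) = ∏_{i=1}^{s/2} (1 − t^{(2i−1)·2^{j_i}})/(1 − t^{2i−1})`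
in `ℤ[t]` — each quotient written as the truncated geometric series it equals —
then `j₁ = s` and `j_i = 0` for all `i ≥ 2`.  Here `j i` (0-based `i`) is
`j_{i+1}`, the exponent attached to the odd number `d_{i+1} = 2i + 1`. -/
theorem stmt_3 (s : ℕ) (hs : 2 ≤ s) (hse : s % 2 = 0) (j : ℕ → ℕ)
    (h : ∏ i ∈ Finset.range (s / 2),
        (∑ l ∈ Finset.range (2 ^ j i), (X : Polynomial ℤ) ^ (l * (2 * i + 1)))
      = ∑ l ∈ Finset.range (2 ^ s), (X : Polynomial ℤ) ^ l) :
    j 0 = s ∧ ∀ i, 1 ≤ i → i < s / 2 → j i = 0 :=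
  stmt_3_general s hs j h
end

section
/- Over any field k of characteristic ≠ 2, the quadratic form x ↦ x C xᵗ on k⁸, where C is the Cartan matrix of the root system E₈, is isomorphic to the 8-dimensional form ⟨1,1,1,1,1,1,1,1⟩ (i.e., 8·⟨1⟩ in the Witt ring, after scaling by the unimodular congruence class); equivalently, the symmetric bilinear form given by the E₈ Cartan matrix is congruent over k to the identity form of rank 8. -/
/-!
Over `ℤ` the root lattice of `E₈` contains an orthogonal frame of eight vectors of norm `4`:
an integer matrix `Q` with `Qᵀ C Q = 4`. Since `4 = 2²` and `2` is invertible in `k`,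
`P = Q / 2` satisfies `Pᵀ C P = 1`, and such a `P` is automatically invertible.
-/

open Matrix

def e8OrthogonalFrame : Matrix (Fin 8) (Fin 8) ℤ :=
  !![0, 0, 0, 0, 0, 0, 0, 4;
     1, 1, 1, 1, 1, 1, 1, 5;
     -1, 1, 1, 1, 1, 1, 1, 7;
     0, 0, 2, 2, 2, 2, 2, 10;
     0, 0, 0, 2, 2, 2, 2, 8;
     0, 0, 0, 0, 2, 2, 2, 6;
     0, 0, 0, 0, 0, 2, 2, 4;
     0, 0, 0, 0, 0, 0, 2, 2]

lemma e8OrthogonalFrame_gram :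
    e8OrthogonalFrameᵀ * CartanMatrix.E₈ * e8OrthogonalFrame = 4 := by
  decide

lemma Matrix.transpose_mul_mul_map {R S n : Type*} [CommRing R] [CommRing S] [Fintype n]
    (f : R →+* S) (P C : Matrix n n R) :
    (P.map f)ᵀ * C.map f * P.map f = (Pᵀ * C * P).map f := by
  simp only [Matrix.map_mul, transpose_map]

lemma Matrix.transpose_smul_mul_mul_smul {R n : Type*} [CommRing R] [Fintype n] (a : R)
    (P C : Matrix n n R) : (a • P)ᵀ * C * (a • P) = (a * a) • (Pᵀ * C * P) := by
  rw [transpose_smul, smul_mul, smul_mul, Matrix.mul_smul, smul_smul]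

lemma Matrix.transpose_inv_smul_mul_mul_inv_smul {k n : Type*} [Field k] [Fintype n]
    [DecidableEq n] {a : k} (ha : a ≠ 0) {P C : Matrix n n k} (h : Pᵀ * C * P = (a * a) • 1) :
    (a⁻¹ • P)ᵀ * C * (a⁻¹ • P) = 1 := by
  rw [transpose_smul_mul_mul_smul, h, smul_smul, mul_mul_mul_comm, inv_mul_cancel₀ ha, one_mul,
    one_smul]

/-- over any field `k` of characteristic ≠ 2, the symmetric
bilinear form on `k⁸` given by the Cartan matrix of the root system `E₈` is
congruent to the identity form of rank 8, i.e. there is `P ∈ GL₈(k)` with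
`Pᵀ · C · P = 1`; equivalently the quadratic form `x ↦ x C xᵗ` is isomorphic
to `⟨1,1,1,1,1,1,1,1⟩`. -/
theorem stmt_5 (k : Type*) [Field k] (hk : (2 : k) ≠ 0) :
    ∃ P : Matrix (Fin 8) (Fin 8) k, IsUnit P.det ∧
      P.transpose * (CartanMatrix.E₈.map (Int.cast : ℤ → k)) * P = 1 := by
  set Q := e8OrthogonalFrame.map (Int.castRingHom k)
  have hQ : Qᵀ * CartanMatrix.E₈.map (Int.castRingHom k) * Q = (2 * 2 : k) • 1 := by
    rw [transpose_mul_mul_map, e8OrthogonalFrame_gram, Matrix.map_ofNat (map_zero _),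
      smul_one_eq_diagonal]
    norm_num
  have hP := transpose_inv_smul_mul_mul_inv_smul hk hQ
  exact ⟨(2 : k)⁻¹ • Q, isUnit_det_of_left_inverse hP, hP⟩
end

section
/- In the Witt ring of a field k of characteristic ≠ 2, let q₁, q₂, q₃, q₄ be the norm forms of four quaternion algebras (2-fold Pfister forms) and c ∈ k×. Suppose ⟨⟨c⟩⟩·(q₁ − q₂) = ⟨m⟩·⟨⟨c⟩⟩·(q₃ − q₄) for some m ∈ k×. Then ⟨⟨c⟩⟩·(q₁ − q₂)² = ⟨⟨c⟩⟩·(q₃ − q₄)², ⟨⟨c⟩⟩·q₁·q₂·(q₃ − q₄) = 0, and ⟨⟨c⟩⟩·q₁·(q₃ − q₄)² = 4·⟨⟨c⟩⟩·q₁·(q₁ − q₂) in W(k). -/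
/-! Since `m² = 1`, the hypothesis can be inverted to `c(q₃ − q₄) = m·c(q₁ − q₂)`; multiplying
the two forms of it gives the first identity, and the other two reduce to the identities
`q₁q₂(q₁ − q₂) = 0` and `q₁(q₁ − q₂)² = 4q₁(q₁ − q₂)`, valid for any `q₁, q₂` with `qᵢ² = 4qᵢ`. -/

section

variable {R : Type*} [CommRing R]

theorem eq_mul_of_eq_mul_of_mul_self_eq_one {a b m : R} (hm : m * m = 1) (h : a = m * b) :
    b = m * a := by
  rw [h, ← mul_assoc, hm, one_mul]

theorem mul_sq_eq_mul_sq_of_eq_mul {c x y m : R} (hm : m * m = 1)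
    (h : c * x = m * (c * y)) : c * x ^ 2 = c * y ^ 2 := by
  have h' := eq_mul_of_eq_mul_of_mul_self_eq_one hm h
  linear_combination x * h - y * h'

theorem mul_mul_sub_eq_zero_of_mul_self {p q n : R} (hp : p * p = n * p) (hq : q * q = n * q) :
    p * q * (p - q) = 0 := by
  linear_combination q * hp - p * hq

theorem mul_sub_sq_of_mul_self {p q n : R} (hp : p * p = n * p) (hq : q * q = n * q) :
    p * (p - q) ^ 2 = n * (p * (p - q)) := by
  linear_combination (p - 2 * q) * hp + p * hq

end

theorem stmt_7_general {W : Type*} [CommRing W]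
    (c q₁ q₂ q₃ q₄ m : W)
    (hm : m * m = 1)
    (h₁ : q₁ * q₁ = 4 * q₁) (h₂ : q₂ * q₂ = 4 * q₂)
    (h : c * (q₁ - q₂) = m * (c * (q₃ - q₄))) :
    c * (q₁ - q₂) ^ 2 = c * (q₃ - q₄) ^ 2 ∧
    c * q₁ * q₂ * (q₃ - q₄) = 0 ∧
    c * q₁ * (q₃ - q₄) ^ 2 = 4 * (c * q₁ * (q₁ - q₂)) := by
  have hsq := mul_sq_eq_mul_sq_of_eq_mul hm h
  have h' := eq_mul_of_eq_mul_of_mul_self_eq_one hm h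
  refine ⟨hsq, ?_, ?_⟩
  · calc c * q₁ * q₂ * (q₃ - q₄) = m * c * (q₁ * q₂ * (q₁ - q₂)) := by
          linear_combination q₁ * q₂ * h'
      _ = 0 := by rw [mul_mul_sub_eq_zero_of_mul_self h₁ h₂, mul_zero]
  · calc c * q₁ * (q₃ - q₄) ^ 2 = c * (q₁ * (q₁ - q₂) ^ 2) := by linear_combination -q₁ * hsq
      _ = 4 * (c * q₁ * (q₁ - q₂)) := by rw [mul_sub_sq_of_mul_self h₁ h₂]; ring

/-- in the Witt ring `W(k)` of a field of characteristic ≠ 2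
(axiomatized as a commutative ring `W`), let `c` denote the class of
`⟨⟨c⟩⟩ = ⟨1,−c⟩`, let `q₁, …, q₄` be classes of 2-fold Pfister forms (norm
forms of quaternion algebras, so `qᵢ² = 4·qᵢ`), and let `m` be the class of a
one-dimensional form `⟨m⟩` (so `m² = 1`).  If
`⟨⟨c⟩⟩(q₁ − q₂) = ⟨m⟩⟨⟨c⟩⟩(q₃ − q₄)`, then
`⟨⟨c⟩⟩(q₁ − q₂)² = ⟨⟨c⟩⟩(q₃ − q₄)²`, `⟨⟨c⟩⟩q₁q₂(q₃ − q₄) = 0`, and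
`⟨⟨c⟩⟩q₁(q₃ − q₄)² = 4·⟨⟨c⟩⟩q₁(q₁ − q₂)`. -/
theorem stmt_7 {W : Type*} [CommRing W]
    (c q₁ q₂ q₃ q₄ m : W)
    (hm : m * m = 1)
    (h₁ : q₁ * q₁ = 4 * q₁) (h₂ : q₂ * q₂ = 4 * q₂)
    (h₃ : q₃ * q₃ = 4 * q₃) (h₄ : q₄ * q₄ = 4 * q₄)
    (h : c * (q₁ - q₂) = m * (c * (q₃ - q₄))) :
    c * (q₁ - q₂) ^ 2 = c * (q₃ - q₄) ^ 2 ∧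
    c * q₁ * q₂ * (q₃ - q₄) = 0 ∧
    c * q₁ * (q₃ - q₄) ^ 2 = 4 * (c * q₁ * (q₁ - q₂)) :=
  stmt_7_general c q₁ q₂ q₃ q₄ m hm h₁ h₂ h
end
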